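/- arXiv:1702.00132 — 3 statements merged into one kernel-verified Lean document; each statement's English description precedes it below -/
import Mathlib

section
/- For a permutation w and a reduced expression ρ ∈ R(w), the weak descent composition des(ρ) equals ∅ (i.e., ρ is virtual) if and only if ρ admits no ρ-compatible sequence. -/
open Equiv MvPolynomial

/-- The simple transposition `sᵢ` interchanging `i` and `i + 1`. -/
def simpleT (i : ℕ) : Equiv.Perm ℕ := Equiv.swap i (i + 1)

/-- A permutation of the positive integers: it fixes `0` and all but finitely many values. -/
def IsPermOfPos (w : Equiv.Perm ℕ) : Prop :=
  w 0 = 0 ∧ ∃ N, ∀ i, N < i → w i = i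

/-- The Coxeter length of `w`, i.e. the number of inversions among positions `≥ 1`. -/
noncomputable def permLen (w : Equiv.Perm ℕ) : ℕ :=
  Set.ncard {p : ℕ × ℕ | 1 ≤ p.1 ∧ p.1 < p.2 ∧ w p.2 < w p.1}

/-- `ρ` is a reduced expression for `w`, recorded left-to-right as `(i_ℓ, …, i_1)`,
so that `w = s_{i_ℓ} ⋯ s_{i_1}` and the length of `ρ` is the Coxeter length of `w`. -/
def IsReducedWord (w : Equiv.Perm ℕ) (ρ : List ℕ) : Prop :=
  (∀ i ∈ ρ, 1 ≤ i) ∧ (ρ.map simpleT).prod = w ∧ ρ.length = permLen w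

/-- `α` is a `ρ`-compatible sequence.  Here, following the paper, the entries
of the reduced expression `ρ = (i_ℓ, …, i_1)` are indexed from the right,
i.e. `ρ_j = i_j`, so the conditions are stated for `ρ.reverse`. -/
def IsCompatible (ρ α : List ℕ) : Prop :=
  α.length = ρ.length ∧
  (∀ j, j < α.length → 1 ≤ α.getD j 0) ∧
  (∀ j, j + 1 < α.length → α.getD j 0 ≤ α.getD (j + 1) 0) ∧
  (∀ j, j + 1 < α.length →
    ρ.reverse.getD j 0 < ρ.reverse.getD (j + 1) 0 → α.getD j 0 < α.getD (j + 1) 0) ∧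
  (∀ j, j < α.length → α.getD j 0 ≤ ρ.reverse.getD j 0)

/-- The Schubert polynomial `𝔖_w`, as the generating function of compatible sequences. -/
noncomputable def SchubertPoly (w : Equiv.Perm ℕ) : MvPolynomial ℕ ℤ :=
  ∑ᶠ ρ ∈ {ρ : List ℕ | IsReducedWord w ρ},
    ∑ᶠ α ∈ {α : List ℕ | IsCompatible ρ α}, (α.map X).prod

/-- `flatten a` removes the zero parts of the weak composition `a`. -/
def flat (a : List ℕ) : List ℕ := a.filter (· ≠ 0)

/-- `Refines β α` : the strong composition `α` is obtained from `β` by summing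
consecutive (nonempty) blocks of parts. -/
def Refines (β α : List ℕ) : Prop :=
  ∃ L : List (List ℕ), (∀ l ∈ L, l ≠ []) ∧ L.flatten = β ∧ L.map List.sum = α

/-- The monomial `x_1^{b_1} ⋯ x_n^{b_n}` associated to a weak composition `b` of length `n`. -/
noncomputable def wcMonomial (b : List ℕ) : MvPolynomial ℕ ℤ :=
  ((List.range b.length).map fun j => X (j + 1) ^ b.getD j 0).prod

/-- `Dominates b a` : `b ≥ a`, i.e. `b_1 + ⋯ + b_k ≥ a_1 + ⋯ + a_k` for all `k`. -/
def Dominates (b a : List ℕ) : Prop := ∀ k, (a.take k).sum ≤ (b.take k).sum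

/-- The fundamental slide polynomial `𝔉_a` of a weak composition `a`. -/
noncomputable def fundSlide (a : List ℕ) : MvPolynomial ℕ ℤ :=
  ∑ᶠ b ∈ {b : List ℕ | b.length = a.length ∧ Dominates b a ∧ Refines (flat b) (flat a)},
    wcMonomial b

/-- The fundamental slide polynomial extended by `𝔉_∅ = 0` (`none` plays the role of `∅`). -/
noncomputable def fundSlideO : Option (List ℕ) → MvPolynomial ℕ ℤ
  | none => 0
  | some a => fundSlide a

/-- Gessel's fundamental quasisymmetric polynomial `F_α(x_1, …, x_k)`. -/
noncomputable def fundQuasi (k : ℕ) (α : List ℕ) : MvPolynomial ℕ ℤ :=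
  ∑ᶠ b ∈ {b : List ℕ | b.length = k ∧ Refines (flat b) α}, wcMonomial b

/-- The run decomposition of a word: the maximal increasing runs, leftmost first. -/
def runsOf (ρ : List ℕ) : List (List ℕ) := ρ.splitBy (· < ·)

/-- The strong descent composition `Des(ρ) = (|ρ^{(1)}|, …, |ρ^{(k)}|)`,
where `ρ^{(1)}` is the rightmost run. -/
def strongDes (ρ : List ℕ) : List ℕ := ((runsOf ρ).map List.length).reverse

/-- Helper computing, left-to-right, the pairs `(r_i, |ρ^{(i)}|)` of
Definition 2.3: `r_k` is the first letter of the leftmost run, and each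
subsequent `r_i = min(ρ^{(i)}_1, r_{i+1} - 1)` (computed in `ℤ`). -/
def desPairsAux : Option ℤ → List (List ℕ) → List (ℤ × ℕ)
  | _, [] => []
  | prev, run :: rest =>
    let r : ℤ :=
      match prev with
      | none => (run.headD 0 : ℤ)
      | some p => min ((run.headD 0 : ℤ)) (p - 1)
    (r, run.length) :: desPairsAux (some r) rest

/-- The weak descent composition `des(ρ)`: the weak composition of length `r_k`
with `des(ρ)_{r_i} = |ρ^{(i)}|` and all other parts `0`, provided all `r_i ≥ 1`;
otherwise `none` (i.e. `des(ρ) = ∅` and `ρ` is virtual). -/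
def weakDes (ρ : List ℕ) : Option (List ℕ) :=
  let ps := desPairsAux none (runsOf ρ)
  if ∀ q ∈ ps, 1 ≤ q.1 then
    some ((List.range ((ps.headD (0, 0)).1.toNat)).map fun j =>
      (((ps.find? fun q => q.1 == (j + 1 : ℤ)).map Prod.snd).getD 0))
  else none

/-- The Stanley symmetric polynomial `S_w(x_1, …, x_k)`. -/
noncomputable def StanleyPoly (k : ℕ) (w : Equiv.Perm ℕ) : MvPolynomial ℕ ℤ :=
  ∑ᶠ ρ ∈ {ρ : List ℕ | IsReducedWord w ρ}, fundQuasi k (strongDes ρ)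

/-- Set the variables `x_{k+1}, x_{k+2}, …` to zero. -/
noncomputable def truncVars (k : ℕ) : MvPolynomial ℕ ℤ →ₐ[ℤ] MvPolynomial ℕ ℤ :=
  aeval fun i => if i ≤ k then X i else 0

/-- Set the single variable `x_k` to zero. -/
noncomputable def setVarZero (k : ℕ) : MvPolynomial ℕ ℤ →ₐ[ℤ] MvPolynomial ℕ ℤ :=
  aeval fun i => if i = k then 0 else X i

/-!
Read `ρ` from left to right and put `γ_0 = ρ_0`, `γ_t = min(ρ_t, γ_{t-1} - [ρ_t < ρ_{t-1}])`.
Every compatible sequence, read backwards, is bounded entrywise by `γ`, and `γ` is itself one as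
soon as it is positive; so a compatible sequence exists iff `γ ≥ 1`. In a reduced word adjacent
letters differ, so consecutive runs meet in a strict descent. Hence `γ` is constant on each run,
equal to the `r_i` in the definition of `des(ρ)`, and `γ ≥ 1` iff all `r_i ≥ 1`.
-/

/-- `permLen w` is by definition `(inversions w).ncard`. -/
def inversions (w : Equiv.Perm ℕ) : Set (ℕ × ℕ) :=
  {p : ℕ × ℕ | 1 ≤ p.1 ∧ p.1 < p.2 ∧ w p.2 < w p.1}

theorem eq_and_eq_succ_of_swap_lt_swap {i x y : ℕ} (hxy : x < y)
    (h : Equiv.swap i (i + 1) y < Equiv.swap i (i + 1) x) : x = i ∧ y = i + 1 := by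
  rw [Equiv.swap_apply_def, Equiv.swap_apply_def] at h
  split_ifs at h <;> omega

theorem inversions_simpleT_mul_subset (i : ℕ) (u : Equiv.Perm ℕ) :
    inversions (simpleT i * u) ⊆ insert (u.symm i, u.symm (i + 1)) (inversions u) := by
  rintro ⟨a, b⟩ ⟨h1, hab, hinv⟩
  by_cases hu : u b < u a
  · exact Or.inr ⟨h1, hab, hu⟩
  · have hlt : u a < u b := lt_of_le_of_ne (not_lt.1 hu) (u.injective.ne hab.ne)
    obtain ⟨rfl, hb⟩ := eq_and_eq_succ_of_swap_lt_swap hlt hinv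
    left
    simp [← hb]

theorem exists_finset_inversions_subset (l : List ℕ) :
    ∃ s : Finset (ℕ × ℕ), inversions (l.map simpleT).prod ⊆ s ∧ s.card ≤ l.length := by
  induction l with
  | nil => exact ⟨∅, fun p hp => by simp_all [inversions]; omega, by simp⟩
  | cons i l ih =>
    obtain ⟨s, hs, hcard⟩ := ih
    set u := (l.map simpleT).prod
    refine ⟨insert (u.symm i, u.symm (i + 1)) s, ?_, ?_⟩
    · simpa using (inversions_simpleT_mul_subset i u).trans (Set.insert_subset_insert hs)
    · simpa using (Finset.card_insert_le _ _).trans (Nat.succ_le_succ hcard)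

theorem permLen_prod_le_length (l : List ℕ) : permLen (l.map simpleT).prod ≤ l.length := by
  obtain ⟨s, hs, hcard⟩ := exists_finset_inversions_subset l
  calc permLen (l.map simpleT).prod ≤ (s : Set (ℕ × ℕ)).ncard :=
        Set.ncard_le_ncard hs s.finite_toSet
    _ = s.card := Set.ncard_coe_finset s
    _ ≤ l.length := hcard

theorem IsReducedWord.isChain_ne {w : Equiv.Perm ℕ} {ρ : List ℕ} (hρ : IsReducedWord w ρ) :
    ρ.IsChain (· ≠ ·) := by
  rw [List.isChain_iff_forall_rel_of_append_cons_cons]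
  rintro a _ A B rfl rfl
  have hcancel : ((A ++ a :: a :: B).map simpleT).prod = ((A ++ B).map simpleT).prod := by
    simp [← mul_assoc, simpleT]
  have hle := permLen_prod_le_length (A ++ B)
  rw [← hcancel, hρ.2.1, ← hρ.2.2] at hle
  simp at hle

/-- `maxCompatFrom g p l` continues the greedy scan `γ_t = min(ρ_t, γ_{t-1} - [ρ_t < ρ_{t-1}])`
along `l`, the previous value being `g` and the previous letter `p`. -/
def maxCompatFrom : ℤ → ℕ → List ℕ → List ℤ
  | _, _, [] => []
  | g, p, a :: l =>
    let g' := min (a : ℤ) (g - if a < p then 1 else 0)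
    g' :: maxCompatFrom g' a l

/-- The entrywise largest candidate for a compatible sequence of `ρ`, listed in the order of the
letters of `ρ` (so reversed with respect to `IsCompatible`). A fictitious previous letter just
above the first one starts the scan with `γ_0 = ρ_0`. -/
def maxCompat (ρ : List ℕ) : List ℤ :=
  maxCompatFrom (ρ.headD 0 + 1) (ρ.headD 0 + 1) ρ

@[simp]
theorem length_maxCompatFrom (g : ℤ) (p : ℕ) (l : List ℕ) :
    (maxCompatFrom g p l).length = l.length := by
  induction l generalizing g p <;> simp [maxCompatFrom, *]

theorem getD_maxCompatFrom_succ (g : ℤ) (p : ℕ) (l : List ℕ) {t : ℕ} (ht : t + 1 < l.length) :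
    (maxCompatFrom g p l).getD (t + 1) 0 =
      min (l.getD (t + 1) 0 : ℤ)
        ((maxCompatFrom g p l).getD t 0 - if l.getD (t + 1) 0 < l.getD t 0 then 1 else 0) := by
  induction l generalizing g p t with
  | nil => simp at ht
  | cons a l ih =>
    obtain _ | ⟨b, l⟩ := l
    · simp at ht
    cases t with
    | zero => simp [maxCompatFrom]
    | succ t => exact ih _ _ (by simpa using ht)

theorem getD_maxCompat_zero {ρ : List ℕ} (hρ : ρ ≠ []) : (maxCompat ρ).getD 0 0 = ρ.getD 0 0 := by
  obtain _ | ⟨a, l⟩ := ρ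
  · exact absurd rfl hρ
  · simp [maxCompat, maxCompatFrom]

/-- Compatibility of `β.reverse` with `ρ`, restated along the letters of `ρ`. -/
def IsCompatibleRev (ρ β : List ℕ) : Prop :=
  β.length = ρ.length ∧ (∀ t < ρ.length, 1 ≤ β.getD t 0 ∧ β.getD t 0 ≤ ρ.getD t 0) ∧
  ∀ t, t + 1 < ρ.length →
    β.getD (t + 1) 0 + (if ρ.getD (t + 1) 0 < ρ.getD t 0 then 1 else 0) ≤ β.getD t 0

theorem List.getD_reverse_of_add_add_one {α : Type*} {l : List α} {d : α} {i j : ℕ}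
    (h : i + j + 1 = l.length) : l.reverse.getD i d = l.getD j d := by
  rw [List.getD_reverse i (by omega)]
  congr 1
  omega

theorem isCompatible_iff_isCompatibleRev {ρ α : List ℕ} :
    IsCompatible ρ α ↔ IsCompatibleRev ρ α.reverse := by
  have rev := @List.getD_reverse_of_add_add_one ℕ
  constructor
  · rintro ⟨hlen, hpos, hmono, hstrict, hle⟩
    refine ⟨by simpa using hlen, fun t ht => ?_, fun t ht => ?_⟩
    · have hp := hpos (ρ.length - 1 - t) (by omega)
      have hl := hle (ρ.length - 1 - t) (by omega)
      rw [rev (j := t) (by omega)] at hl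
      rw [rev (j := ρ.length - 1 - t) (by omega)]
      exact ⟨hp, hl⟩
    · have hm := hmono (ρ.length - 2 - t) (by omega)
      have hs := hstrict (ρ.length - 2 - t) (by omega)
      rw [rev (j := t + 1) (by omega), rev (j := t) (by omega)] at hs
      rw [rev (j := ρ.length - 2 - t) (by omega), rev (j := ρ.length - 2 - t + 1) (by omega)]
      split_ifs at * <;> omega
  · rintro ⟨hlen, hbound, hstep⟩
    refine ⟨by simpa using hlen, fun j hj => ?_, fun j hj => ?_, fun j hj hasc => ?_,
      fun j hj => ?_⟩
    all_goals simp only [List.length_reverse] at hj hlen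
    · have hp := (hbound (ρ.length - 1 - j) (by omega)).1
      rwa [rev (j := j) (by omega)] at hp
    · have hs := hstep (ρ.length - 2 - j) (by omega)
      rw [rev (j := j) (by omega), rev (j := j + 1) (by omega)] at hs
      omega
    · have hs := hstep (ρ.length - 2 - j) (by omega)
      rw [rev (j := j) (by omega), rev (j := j + 1) (by omega)] at hs
      rw [rev (j := ρ.length - 2 - j + 1) (by omega), rev (j := ρ.length - 2 - j) (by omega)]
        at hasc
      rw [if_pos hasc] at hs
      omega
    · have hl := (hbound (ρ.length - 1 - j) (by omega)).2
      rwa [rev (j := j) (by omega), ← rev (i := j) (j := ρ.length - 1 - j) (by omega)] at hl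

theorem IsCompatibleRev.le_maxCompat {ρ β : List ℕ} (h : IsCompatibleRev ρ β) {t : ℕ}
    (ht : t < ρ.length) : (β.getD t 0 : ℤ) ≤ (maxCompat ρ).getD t 0 := by
  obtain ⟨-, hbound, hstep⟩ := h
  induction t with
  | zero =>
    rw [getD_maxCompat_zero (List.ne_nil_of_length_pos ht)]
    exact_mod_cast (hbound 0 ht).2
  | succ t ih =>
    rw [maxCompat, getD_maxCompatFrom_succ _ _ _ ht, ← maxCompat]
    have := hstep t ht
    have := ih (by omega)
    refine le_min (by exact_mod_cast (hbound _ ht).2) ?_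
    split_ifs at * <;> omega

theorem getD_maxCompat_le (ρ : List ℕ) {t : ℕ} (ht : t < ρ.length) :
    (maxCompat ρ).getD t 0 ≤ ρ.getD t 0 := by
  cases t with
  | zero => rw [getD_maxCompat_zero (List.ne_nil_of_length_pos ht)]
  | succ t => exact (getD_maxCompatFrom_succ _ _ _ ht).trans_le (min_le_left _ _)

theorem isCompatibleRev_maxCompat {ρ : List ℕ} (h : ∀ x ∈ maxCompat ρ, 1 ≤ x) :
    IsCompatibleRev ρ ((maxCompat ρ).map Int.toNat) := by
  have hget (t : ℕ) : ((maxCompat ρ).map Int.toNat).getD t 0 = ((maxCompat ρ).getD t 0).toNat :=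
    List.getD_map (maxCompat ρ) 0 Int.toNat (n := t)
  have hpos (t : ℕ) (ht : t < ρ.length) : 1 ≤ (maxCompat ρ).getD t 0 := by
    rw [List.getD_eq_getElem _ _ (by simpa [maxCompat] using ht)]
    exact h _ (List.getElem_mem _)
  refine ⟨by simp [maxCompat], fun t ht => ?_, fun t ht => ?_⟩
  · have := hpos t ht
    have := getD_maxCompat_le ρ ht
    rw [hget]
    omega
  · have hrec := getD_maxCompatFrom_succ (ρ.headD 0 + 1) (ρ.headD 0 + 1) ρ ht
    rw [← maxCompat] at hrec
    have := hpos (t + 1) ht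
    rw [hget, hget]
    split_ifs at * <;> omega

theorem exists_isCompatible_iff (ρ : List ℕ) :
    (∃ α, IsCompatible ρ α) ↔ ∀ x ∈ maxCompat ρ, 1 ≤ x := by
  simp_rw [isCompatible_iff_isCompatibleRev]
  refine ⟨fun ⟨α, hα⟩ x hx => ?_, fun h =>
    ⟨((maxCompat ρ).map Int.toNat).reverse, by simpa using isCompatibleRev_maxCompat h⟩⟩
  obtain ⟨t, ht, rfl⟩ := List.getElem_of_mem hx
  rw [maxCompat, length_maxCompatFrom] at ht
  have hpos := (hα.2.1 t ht).1
  have hle := hα.le_maxCompat ht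
  rw [List.getD_eq_getElem (maxCompat ρ) _ (by simpa [maxCompat] using ht)] at hle
  omega

theorem maxCompatFrom_append_of_isChain {a : ℕ} {t : List ℕ} (hc : (a :: t).IsChain (· < ·))
    {g : ℤ} (hg : g ≤ a) (rest : List ℕ) :
    maxCompatFrom g a (t ++ rest) =
      List.replicate t.length g ++ maxCompatFrom g (t.getLastD a) rest := by
  induction t generalizing a with
  | nil => simp
  | cons b t ih =>
    obtain ⟨hab, hc⟩ := List.isChain_cons_cons.1 hc
    have hgb : g ≤ b := hg.trans (by exact_mod_cast hab.le)
    have hstep : min (b : ℤ) (g - if b < a then 1 else 0) = g := by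
      rw [if_neg (by omega), sub_zero, min_eq_right hgb]
    simp only [List.cons_append, maxCompatFrom, hstep, ih hc hgb, List.getLastD_cons,
      List.length_cons, List.replicate_succ]

theorem maxCompatFrom_flatten (L : List (List ℕ)) (hne : ∀ m ∈ L, m ≠ [])
    (hinc : ∀ m ∈ L, m.IsChain (· < ·))
    (hdesc : L.IsChain fun m₁ m₂ => m₂.headD 0 < m₁.getLastD 0) {g : ℤ} {p : ℕ}
    (hp : ∀ m ∈ L.head?, m.headD 0 < p) :
    maxCompatFrom g p L.flatten =
      (desPairsAux (some g) L).flatMap fun q => List.replicate q.2 q.1 := by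
  induction L generalizing g p with
  | nil => simp [desPairsAux, maxCompatFrom]
  | cons m L ih =>
    obtain _ | ⟨a, t⟩ := m
    · exact absurd rfl (hne [] (by simp))
    have hap : a < p := by simpa using hp
    obtain ⟨hnext, hdesc⟩ := List.isChain_cons.1 hdesc
    have hrun := maxCompatFrom_append_of_isChain (hinc _ List.mem_cons_self)
      (min_le_left (a : ℤ) (g - 1)) L.flatten
    rw [ih (fun m hm => hne m (by simp [hm])) (fun m hm => hinc m (by simp [hm])) hdesc
      (by rwa [List.getLastD_cons] at hnext)] at hrun
    simp [desPairsAux, maxCompatFrom, hap, hrun, List.replicate_succ]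

theorem map_snd_desPairsAux (o : Option ℤ) (L : List (List ℕ)) :
    (desPairsAux o L).map Prod.snd = L.map List.length := by
  induction L generalizing o <;> simp [desPairsAux, *]

theorem runsOf_isChain_headD_lt_getLastD {ρ : List ℕ} (hρ : ρ.IsChain (· ≠ ·)) :
    (runsOf ρ).IsChain fun m₁ m₂ => m₂.headD 0 < m₁.getLastD 0 := by
  rw [runsOf]
  have hle := List.isChain_getLast_head_splitBy (fun x y : ℕ => decide (x < y)) ρ
  rw [← List.flatten_splitBy (fun x y : ℕ => decide (x < y)) ρ,
    List.isChain_flatten (List.nil_notMem_splitBy _ _)] at hρ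
  -- `splitBy` only gives `¬ last < head` at run boundaries; adjacent letters of `ρ` differ.
  rw [List.isChain_iff_getElem] at hle hρ ⊢
  intro i hi
  obtain ⟨hl, hh, hnot⟩ := hle i hi
  have hne := hρ.2 i hi
  simp only [List.getLast?_eq_some_getLast hl, List.head?_eq_some_head hh, Option.mem_def,
    Option.some.injEq, forall_eq'] at hne
  simp only [List.headD_eq_head?, List.head?_eq_some_head hh, List.getLastD_eq_getLast?,
    List.getLast?_eq_some_getLast hl, Option.getD_some]
  simp only [decide_eq_false_iff_not, not_lt] at hnot
  omega

theorem maxCompat_eq_flatMap_desPairsAux {ρ : List ℕ} (hρ : ρ.IsChain (· ≠ ·)) :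
    maxCompat ρ = (desPairsAux none (runsOf ρ)).flatMap fun q => List.replicate q.2 q.1 := by
  have hflat : (runsOf ρ).flatten = ρ := List.flatten_splitBy _ ρ
  have hne (m) (hm : m ∈ runsOf ρ) : m ≠ [] := List.ne_nil_of_mem_splitBy hm
  have hinc (m) (hm : m ∈ runsOf ρ) : m.IsChain (· < ·) :=
    (List.isChain_of_mem_splitBy hm).imp fun _ _ h => by simpa using h
  have hdesc := runsOf_isChain_headD_lt_getLastD hρ
  rcases hL : runsOf ρ with _ | ⟨_ | ⟨a, t⟩, L⟩
  · rw [hL, List.flatten_nil] at hflat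
    subst hflat
    rfl
  · exact absurd rfl (hne [] (by simp [hL]))
  rw [hL] at hflat hne hinc hdesc
  have hstart :
      desPairsAux none ((a :: t) :: L) = desPairsAux (some (a + 1)) ((a :: t) :: L) := by
    simp [desPairsAux]
  rw [hstart, ← maxCompatFrom_flatten _ hne hinc hdesc (p := a + 1) (by simp), hflat, maxCompat,
    ← hflat]
  simp

theorem forall_desPairsAux_one_le_iff {ρ : List ℕ} (hρ : ρ.IsChain (· ≠ ·)) :
    (∀ q ∈ desPairsAux none (runsOf ρ), 1 ≤ q.1) ↔ ∀ x ∈ maxCompat ρ, 1 ≤ x := by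
  have hlen (q) (hq : q ∈ desPairsAux none (runsOf ρ)) : q.2 ≠ 0 := by
    have : q.2 ∈ (runsOf ρ).map List.length := by
      rw [← map_snd_desPairsAux]
      exact List.mem_map_of_mem hq
    obtain ⟨m, hm, hmq⟩ := List.mem_map.1 this
    simpa [← hmq] using List.ne_nil_of_mem_splitBy hm
  rw [maxCompat_eq_flatMap_desPairsAux hρ]
  simp only [List.mem_flatMap, List.mem_replicate]
  exact ⟨fun h x ⟨q, hq, _, hx⟩ => hx ▸ h q hq, fun h q hq => h q.1 ⟨q, hq, hlen q hq, rfl⟩⟩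

theorem weakDes_eq_none_iff (ρ : List ℕ) :
    weakDes ρ = none ↔ ¬ ∀ q ∈ desPairsAux none (runsOf ρ), 1 ≤ q.1 := by
  simp [weakDes]

theorem virtual_iff_no_compatible_general (w : Equiv.Perm ℕ)
    (ρ : List ℕ) (hρ : IsReducedWord w ρ) :
    weakDes ρ = none ↔ ¬ ∃ α : List ℕ, IsCompatible ρ α := by
  rw [weakDes_eq_none_iff, forall_desPairsAux_one_le_iff hρ.isChain_ne, exists_isCompatible_iff]

/-- For a permutation `w` and a reduced expression `ρ ∈ R(w)`,
the weak descent composition `des(ρ)` equals `∅` (i.e. `ρ` is virtual) if and only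
if `ρ` admits no `ρ`-compatible sequence. -/
theorem virtual_iff_no_compatible (w : Equiv.Perm ℕ) (hw : IsPermOfPos w)
    (ρ : List ℕ) (hρ : IsReducedWord w ρ) :
    weakDes ρ = none ↔ ¬ ∃ α : List ℕ, IsCompatible ρ α :=
  virtual_iff_no_compatible_general w ρ hρ
end

section
/- Let a be a weak composition of length ℓ and suppose there exist indices 1 ≤ r ≤ s ≤ ℓ such that a_i = 0 for all i < r and a_i ≠ 0 for all r ≤ i ≤ s. Then for any k ≤ s, the fundamental slide polynomial 𝔉_a with the variables x_{k+1}, …, x_ℓ set to 0 equals the fundamental quasisymmetric polynomial F_{flat(a)}(x_1, …, x_k). -/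
open Equiv MvPolynomial

/-! Truncating at `k` keeps exactly the monomials of `𝔉_a` whose exponent vector `b` vanishes
beyond position `k`, and padding with zeros matches these `b` with the length-`k` weak
compositions `c` such that `flat c` refines `flat a`. The point is that such a `c` automatically
dominates `a`. The partial sums of `a` vanish before position `r`. For `r - 1 ≤ m < k`, the
nonzero parts `a_{m+1}, …, a_s` leave at least `k - m` blocks of `flat a` after the parts
coming from `a_1, …, a_m`. These later blocks must be filled by the at most `k - m` remaining
parts of `c`, so the first `m` parts of `c` already cover the blocks from `a_1, …, a_m`. -/

lemma finsum_mem_ite_eq_finsum_mem_sep {α M : Type*} [AddCommMonoid M] (s : Set α)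
    (p : α → Prop) [DecidablePred p] (f : α → M) :
    ∑ᶠ x ∈ s, (if p x then f x else 0) = ∑ᶠ x ∈ {x ∈ s | p x}, f x := by
  rw [finsum_mem_def, finsum_mem_def]
  congr 1 with x
  by_cases hs : x ∈ s <;> by_cases hp : p x <;> simp [hs, hp]

lemma flat_append (x y : List ℕ) : flat (x ++ y) = flat x ++ flat y :=
  List.filter_append ..

lemma flat_replicate_zero (d : ℕ) : flat (List.replicate d 0) = [] := by
  simp [flat]

lemma sum_flat (l : List ℕ) : (flat l).sum = l.sum := by
  induction l with
  | nil => rfl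
  | cons x l ih => by_cases hx : x = 0 <;> simp [flat, hx] at ih ⊢ <;> omega

lemma length_flat_le (l : List ℕ) : (flat l).length ≤ l.length :=
  List.length_filter_le ..

lemma length_flat_take_add_length_flat_drop (l : List ℕ) (m : ℕ) :
    (flat (l.take m)).length + (flat (l.drop m)).length = (flat l).length := by
  rw [← List.length_append, ← flat_append, List.take_append_drop]

lemma take_flat_length_flat_take (l : List ℕ) (m : ℕ) :
    (flat l).take (flat (l.take m)).length = flat (l.take m) := by
  calc (flat l).take (flat (l.take m)).length
      = (flat (l.take m) ++ flat (l.drop m)).take (flat (l.take m)).length := by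
        rw [← flat_append, List.take_append_drop]
    _ = flat (l.take m) := List.take_left

lemma sum_take_eq_sum_take_flat (l : List ℕ) (m : ℕ) :
    (l.take m).sum = ((flat l).take (flat (l.take m)).length).sum := by
  rw [take_flat_length_flat_take, sum_flat]

lemma sub_le_length_flat_drop {a : List ℕ} {m s : ℕ} (hs : s ≤ a.length)
    (hpos : ∀ i, m ≤ i → i < s → a.getD i 0 ≠ 0) :
    s - m ≤ (flat (a.drop m)).length := by
  have hne : ∀ x ∈ (a.drop m).take (s - m), x ≠ 0 := by
    intro x hx
    obtain ⟨i, hi, rfl⟩ := List.mem_iff_getElem.mp hx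
    simp only [List.length_take, List.length_drop] at hi
    have h := hpos (m + i) (by omega) (by omega)
    rw [List.getD_eq_getElem _ _ (by omega)] at h
    simpa using h
  have hsub : ((a.drop m).take (s - m)).Sublist (flat (a.drop m)) := by
    have hflat : flat ((a.drop m).take (s - m)) = (a.drop m).take (s - m) :=
      List.filter_eq_self.mpr (by simpa using hne)
    exact hflat ▸ (List.take_sublist _ _).filter _
  have := hsub.length_le
  simp only [List.length_take, List.length_drop] at this
  omega

namespace Refines

lemma sum_eq {β α : List ℕ} (h : Refines β α) : β.sum = α.sum := by
  obtain ⟨L, -, rfl, rfl⟩ := h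
  exact List.sum_flatten

lemma sum_take_le {β α : List ℕ} (h : Refines β α) {t c : ℕ} (ht : t ≤ α.length)
    (hc : β.length ≤ c + (α.length - t)) :
    (α.take t).sum ≤ (β.take c).sum := by
  obtain ⟨L, hne, rfl, rfl⟩ := h
  set P := (L.take t).flatten
  have hsplit : L.flatten = P ++ (L.drop t).flatten := by
    rw [← List.flatten_append, List.take_append_drop]
  have hdrop : (L.drop t).length ≤ (L.drop t).flatten.length := by
    rw [List.length_flatten, ← List.length_map (f := List.length)]
    refine List.length_le_sum_of_one_le _ fun n hn => ?_
    obtain ⟨l, hl, rfl⟩ := List.mem_map.mp hn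
    exact List.length_pos_iff.mpr (hne l (List.mem_of_mem_drop hl))
  -- The blocks after the first `t` are nonempty, so the first `t` blocks use at most `c` parts.
  have hP : P.length ≤ c := by
    have := congrArg List.length hsplit
    simp only [List.length_append, List.length_map, List.length_drop] at this hc hdrop ht
    omega
  calc ((L.map List.sum).take t).sum = (L.flatten.take P.length).sum := by
        rw [hsplit, List.take_left, ← List.map_take, ← List.sum_flatten]
    _ ≤ (L.flatten.take c).sum := List.monotone_sum_take _ hP

end Refines

lemma sum_take_le_of_refines_flat {a b : List ℕ} (h : Refines (flat b) (flat a)) {m : ℕ}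
    (hm : b.length - m ≤ (flat (a.drop m)).length) :
    (a.take m).sum ≤ (b.take m).sum := by
  rw [sum_take_eq_sum_take_flat a, sum_take_eq_sum_take_flat b]
  have ha := length_flat_take_add_length_flat_drop a m
  have hb := length_flat_take_add_length_flat_drop b m
  have hbd : (flat (b.drop m)).length ≤ b.length - m := by
    simpa using length_flat_le (b.drop m)
  exact h.sum_take_le (by omega) (by omega)

lemma dominates_of_refines_flat {a b : List ℕ} {p s : ℕ} (hs : s ≤ a.length)
    (hzero : ∀ i < p, a.getD i 0 = 0) (hpos : ∀ i, p ≤ i → i < s → a.getD i 0 ≠ 0)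
    (hb : b.length ≤ s) (h : Refines (flat b) (flat a)) : Dominates b a := by
  intro m
  rcases lt_or_ge m p with hmp | hpm
  · have hsum : (a.take m).sum = 0 := by
      refine List.sum_eq_zero fun x hx => ?_
      obtain ⟨i, hi, rfl⟩ := List.mem_iff_getElem.mp hx
      simp only [List.length_take] at hi
      have h := hzero i (by omega)
      rw [List.getD_eq_getElem _ _ (by omega)] at h
      simpa using h
    exact hsum ▸ Nat.zero_le _
  · apply sum_take_le_of_refines_flat h
    calc b.length - m ≤ s - m := by omega
      _ ≤ _ := sub_le_length_flat_drop hs fun i hi his => hpos i (by omega) his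

lemma Dominates.append {a b : List ℕ} (h : Dominates b a) (c : List ℕ) :
    Dominates (b ++ c) a := fun m =>
  (h m).trans <| by simp only [List.take_append, List.sum_append, le_add_iff_nonneg_right, zero_le]

lemma finite_setOf_length_eq_refines_flat (α : List ℕ) (n : ℕ) :
    {b : List ℕ | b.length = n ∧ Refines (flat b) α}.Finite := by
  refine ((List.finite_length_eq (Fin (α.sum + 1)) n).image (List.map Fin.val)).subset ?_
  rintro b ⟨hlen, h⟩
  have hle (x : ℕ) (hx : x ∈ b) : x < α.sum + 1 := by
    have := List.le_sum_of_mem hx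
    rw [← sum_flat, h.sum_eq] at this
    omega
  refine ⟨b.map (Fin.ofNat (α.sum + 1)), by simpa using hlen, ?_⟩
  rw [List.map_map]
  exact (List.map_congr_left fun x hx => by simp [Nat.mod_eq_of_lt (hle x hx)]).trans b.map_id

lemma getD_append_replicate {α : Type*} (b : List α) (n j : ℕ) (d : α) :
    (b ++ List.replicate n d).getD j d = b.getD j d := by
  grind

lemma wcMonomial_eq_prod_range {b : List ℕ} {n : ℕ} (hn : b.length ≤ n) :
    wcMonomial b = ((List.range n).map fun j => X (j + 1) ^ b.getD j 0).prod := by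
  induction n, hn using Nat.le_induction with
  | base => rfl
  | succ n hn ih =>
    rw [List.prod_range_succ, ← ih, List.getD_eq_default _ _ hn, pow_zero, mul_one]

lemma wcMonomial_append_replicate_zero (b : List ℕ) (d : ℕ) :
    wcMonomial (b ++ List.replicate d 0) = wcMonomial b := by
  rw [wcMonomial, wcMonomial_eq_prod_range (b := b) (n := (b ++ List.replicate d 0).length)
    (by simp)]
  simp only [getD_append_replicate]

lemma truncVars_wcMonomial (k : ℕ) (b : List ℕ) :
    truncVars k (wcMonomial b) = if ∀ x ∈ b.drop k, x = 0 then wcMonomial b else 0 := by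
  rw [wcMonomial, truncVars, map_list_prod, List.map_map]
  split_ifs with h
  · refine congrArg List.prod (List.map_congr_left fun j hj => ?_)
    by_cases hjk : j + 1 ≤ k
    · simp [hjk]
    · have hj : j < b.length := List.mem_range.mp hj
      have : b.getD j 0 = 0 := by
        rw [List.getD_eq_getElem _ _ hj]
        exact h _ (List.mem_iff_getElem.mpr ⟨j - k, by simp; omega, by simp; congr; omega⟩)
      rw [Function.comp_apply, this]
      simp
  · push Not at h
    obtain ⟨x, hx, hx0⟩ := h
    obtain ⟨i, hi, rfl⟩ := List.mem_iff_getElem.mp hx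
    simp only [List.length_drop] at hi
    refine List.prod_eq_zero (List.mem_map.mpr ⟨k + i, List.mem_range.mpr (by omega), ?_⟩)
    rw [Function.comp_apply, map_pow, aeval_X, if_neg (by omega),
      List.getD_eq_getElem _ _ (by omega), zero_pow (by simpa using hx0)]

lemma bijOn_append_replicate_zero {a : List ℕ} {k : ℕ} (hk : k ≤ a.length)
    (hdom : ∀ c : List ℕ, c.length = k → Refines (flat c) (flat a) → Dominates c a) :
    Set.BijOn (· ++ List.replicate (a.length - k) 0)
      {c | c.length = k ∧ Refines (flat c) (flat a)}
      {b ∈ {b : List ℕ | b.length = a.length ∧ Dominates b a ∧ Refines (flat b) (flat a)} |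
        ∀ x ∈ b.drop k, x = 0} := by
  refine ⟨?_, fun c₁ _ c₂ _ h => List.append_cancel_right h, ?_⟩
  · rintro c ⟨hc, h⟩
    refine ⟨⟨by simp [hc]; omega, (hdom c hc h).append _, ?_⟩, by simp [hc]⟩
    rwa [flat_append, flat_replicate_zero, List.append_nil]
  · rintro b ⟨⟨hb, -, h⟩, hzero⟩
    have hdrop : b.drop k = List.replicate (a.length - k) 0 :=
      List.eq_replicate_iff.mpr ⟨by simp [hb], hzero⟩
    have hpad : b.take k ++ List.replicate (a.length - k) 0 = b := by
      rw [← hdrop, List.take_append_drop]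
    refine ⟨b.take k, ⟨by simp [hb, hk], ?_⟩, hpad⟩
    rwa [← hpad, flat_append, flat_replicate_zero, List.append_nil] at h

theorem fundSlide_trunc_eq_fundQuasi_general (a : List ℕ) (r s : ℕ)
    (hs : s ≤ a.length)
    (hzero : ∀ i, 1 ≤ i → i < r → a.getD (i - 1) 0 = 0)
    (hpos : ∀ i, r ≤ i → i ≤ s → a.getD (i - 1) 0 ≠ 0)
    (k : ℕ) (hk : k ≤ s) :
    truncVars k (fundSlide a) = fundQuasi k (flat a) := by
  have hdom (c : List ℕ) (hc : c.length = k) (h : Refines (flat c) (flat a)) : Dominates c a :=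
    dominates_of_refines_flat hs (p := r - 1)
      (fun i hi => by simpa using hzero (i + 1) (by omega) (by omega))
      (fun i hi his => by simpa using hpos (i + 1) (by omega) (by omega)) (hc ▸ hk) h
  have hfin : {b : List ℕ | b.length = a.length ∧ Dominates b a ∧
      Refines (flat b) (flat a)}.Finite :=
    (finite_setOf_length_eq_refines_flat (flat a) a.length).subset fun b hb => ⟨hb.1, hb.2.2⟩
  rw [fundSlide, fundQuasi]
  refine (AddMonoidHom.map_finsum_mem _
    (truncVars k : MvPolynomial ℕ ℤ →+ MvPolynomial ℕ ℤ) hfin).trans ?_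
  simp only [AddMonoidHom.coe_coe, truncVars_wcMonomial]
  rw [finsum_mem_ite_eq_finsum_mem_sep]
  exact (finsum_mem_eq_of_bijOn _ (bijOn_append_replicate_zero (hk.trans hs) hdom)
    fun c _ => (wcMonomial_append_replicate_zero c _).symm).symm

/-- Let `a` be a weak composition of length `ℓ` such that, for some
`1 ≤ r ≤ s ≤ ℓ`, the part `a_i` is zero for all `i < r` and nonzero for all
`r ≤ i ≤ s` (parts are indexed starting from `1`).  Then for any `k ≤ s`, the
fundamental slide polynomial `𝔉_a` with the variables `x_{k+1}, …, x_ℓ` set to `0`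
equals the fundamental quasisymmetric polynomial `F_{flat(a)}(x_1, …, x_k)`. -/
theorem fundSlide_trunc_eq_fundQuasi (a : List ℕ) (r s : ℕ)
    (hr : 1 ≤ r) (hrs : r ≤ s) (hs : s ≤ a.length)
    (hzero : ∀ i, 1 ≤ i → i < r → a.getD (i - 1) 0 = 0)
    (hpos : ∀ i, r ≤ i → i ≤ s → a.getD (i - 1) 0 ≠ 0)
    (k : ℕ) (hk : k ≤ s) :
    truncVars k (fundSlide a) = fundQuasi k (flat a) :=
  fundSlide_trunc_eq_fundQuasi_general a r s hs hzero hpos k hk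
end

section
/- Let v be a permutation with no descent at any position ≥ k+1, i.e., v_{k+1} < v_{k+2} < ⋯. Then there is exactly one integer b > k such that ℓ(v(k,b)) = ℓ(v) + 1, namely the smallest b > k with v_b > v_k. -/
/-!
Let `σ = (a b)` with `a < b`. Relabelling a pair of positions `(i, j)` with `i < a` or `b < j` as
`(σ i, σ j)`, and fixing every other pair, is an involution `swapPair a b` which matches the
inversions of `v * σ` with those of `v`, except at `(a, b)` and at the pairs `(a, c)`, `(c, b)`
with `a < c < b`; those two change status exactly when `v c` lies strictly between `v a` and `v b`.
Hence swapping `a < b` with `v a < v b` raises the length by one when no such `c` exists and by at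
least three otherwise, and swapping a descent lowers it. When `v` increases after `k`, the least
`b > k` with `v k < v b` has no value in between, while every other `b' > b` has `b` in between.
-/

open Equiv MvPolynomial

def invSet (w : Perm ℕ) : Set (ℕ × ℕ) := {p | 1 ≤ p.1 ∧ p.1 < p.2 ∧ w p.2 < w p.1}

lemma permLen_eq_ncard_invSet (w : Perm ℕ) : permLen w = (invSet w).ncard := rfl

lemma finite_invSet {w : Perm ℕ} {N : ℕ} (hN : ∀ i, N < i → w i = i) : (invSet w).Finite := by
  refine ((Set.finite_Iic N).prod (Set.finite_Iic N)).subset ?_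
  rintro ⟨i, j⟩ ⟨-, hij, hw⟩
  dsimp only at hij hw
  have hj : j ≤ N := by
    by_contra! hj
    rw [hN j hj] at hw
    have hwi : w (w i) = w i := hN _ (by omega)
    have hi : w i = i := w.injective hwi
    omega
  exact ⟨Set.mem_Iic.2 (by omega), Set.mem_Iic.2 hj⟩

def swapPair (a b : ℕ) (p : ℕ × ℕ) : ℕ × ℕ :=
  if p.1 < a ∨ b < p.2 then (swap a b p.1, swap a b p.2) else p

section SwapPair

variable {a b : ℕ}

lemma swapPair_involutive (hab : a < b) : Function.Involutive (swapPair a b) := by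
  rintro ⟨i, j⟩
  simp only [swapPair, swap_apply_def]
  split_ifs <;> simp_all <;> omega

lemma swapPair_eq_self {p : ℕ × ℕ} (h₁ : a ≤ p.1) (h₂ : p.2 ≤ b) : swapPair a b p = p := by
  simp [swapPair, h₁, h₂]

lemma swapPair_mem_invSet_mul_swap {v : Perm ℕ} (ha : 1 ≤ a) (hab : a < b) (hv : v a < v b)
    {p : ℕ × ℕ} (hp : p ∈ invSet v) : swapPair a b p ∈ invSet (v * swap a b) := by
  obtain ⟨i, j⟩ := p
  obtain ⟨h1, h2, h3⟩ := hp
  simp only [invSet, swapPair, Set.mem_ofPred_eq, Perm.mul_apply, swap_apply_def] at *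
  split_ifs at * <;> dsimp only at * <;> subst_vars <;> omega

lemma swapPair_mem_invSet_of_mem_invSet_mul_swap {v : Perm ℕ} (ha : 1 ≤ a) (hab : a < b)
    (hcover : ∀ c, a < c → c < b → v c < v a ∨ v b < v c) {p : ℕ × ℕ}
    (hp : p ∈ invSet (v * swap a b)) (hne : p ≠ (a, b)) : swapPair a b p ∈ invSet v := by
  obtain ⟨i, j⟩ := p
  obtain ⟨h1, h2, h3⟩ := hp
  simp only [invSet, swapPair, Set.mem_ofPred_eq, Perm.mul_apply, swap_apply_def, ne_eq,
    Prod.mk.injEq] at *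
  split_ifs at * <;> dsimp only at * <;> subst_vars <;>
    first | omega | (have := hcover j; omega) | (have := hcover i; omega)

lemma mk_mem_invSet_mul_swap_iff {v : Perm ℕ} (ha : 1 ≤ a) (hab : a < b) :
    (a, b) ∈ invSet (v * swap a b) ↔ v a < v b := by
  simp [invSet, ha, hab]

lemma invSet_mul_swap_of_cover {v : Perm ℕ} (ha : 1 ≤ a) (hab : a < b) (hv : v a < v b)
    (hcover : ∀ c, a < c → c < b → v c < v a ∨ v b < v c) :
    invSet (v * swap a b) = insert (a, b) (swapPair a b '' invSet v) := by
  refine subset_antisymm (fun p hp ↦ ?_) (Set.insert_subset ?_ ?_)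
  · by_cases hne : p = (a, b)
    · exact hne ▸ Set.mem_insert _ _
    · exact Set.mem_insert_of_mem _ ⟨_, swapPair_mem_invSet_of_mem_invSet_mul_swap ha hab hcover
        hp hne, swapPair_involutive hab p⟩
  · exact (mk_mem_invSet_mul_swap_iff ha hab).2 hv
  · rintro _ ⟨p, hp, rfl⟩
    exact swapPair_mem_invSet_mul_swap ha hab hv hp

lemma permLen_mul_swap_of_cover {v : Perm ℕ} {N : ℕ} (hN : ∀ i, N < i → v i = i) (ha : 1 ≤ a)
    (hab : a < b) (hv : v a < v b) (hcover : ∀ c, a < c → c < b → v c < v a ∨ v b < v c) :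
    permLen (v * swap a b) = permLen v + 1 := by
  have hnotMem : (a, b) ∉ swapPair a b '' invSet v := by
    rintro ⟨p, hp, hpab⟩
    rw [← swapPair_involutive hab p, hpab, swapPair_eq_self (p := (a, b)) le_rfl le_rfl] at hp
    exact hp.2.2.not_gt hv
  rw [permLen_eq_ncard_invSet, permLen_eq_ncard_invSet, invSet_mul_swap_of_cover ha hab hv hcover,
    Set.ncard_insert_of_notMem hnotMem ((finite_invSet hN).image _),
    Set.ncard_image_of_injective _ (swapPair_involutive hab).injective]

lemma permLen_mul_swap_lt {v : Perm ℕ} {N : ℕ} (hN : ∀ i, N < i → v i = i) (ha : 1 ≤ a)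
    (hab : a < b) (hv : v b < v a) : permLen (v * swap a b) < permLen v := by
  have hsub : swapPair a b '' invSet (v * swap a b) ⊆ invSet v := by
    rintro _ ⟨p, hp, rfl⟩
    simpa using swapPair_mem_invSet_mul_swap (v := v * swap a b) ha hab (by simpa using hv) hp
  have hssub : swapPair a b '' invSet (v * swap a b) ⊂ invSet v := by
    refine (Set.ssubset_iff_of_subset hsub).2 ⟨(a, b), ⟨ha, hab, hv⟩, ?_⟩
    rintro ⟨p, hp, hpab⟩
    rw [← swapPair_involutive hab p, hpab, swapPair_eq_self (p := (a, b)) le_rfl le_rfl,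
      mk_mem_invSet_mul_swap_iff ha hab] at hp
    exact hp.not_gt hv
  rw [permLen_eq_ncard_invSet, permLen_eq_ncard_invSet,
    ← Set.ncard_image_of_injective _ (swapPair_involutive hab).injective]
  exact Set.ncard_lt_ncard hssub (finite_invSet hN)

lemma permLen_add_three_le_mul_swap {v : Perm ℕ} {N : ℕ} {c : ℕ} (hN : ∀ i, N < i → v i = i)
    (ha : 1 ≤ a) (hac : a < c) (hcb : c < b) (hvac : v a < v c) (hvcb : v c < v b) :
    permLen v + 3 ≤ permLen (v * swap a b) := by
  have hab : a < b := hac.trans hcb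
  set T : Set (ℕ × ℕ) := {(a, b), (a, c), (c, b)}
  have hT : T.ncard = 3 := Set.ncard_eq_three.2
    ⟨_, _, _, by simp [hcb.ne'], by simp [hac.ne], by simp [hac.ne], rfl⟩
  have hdisj : Disjoint (invSet v) T := by
    rw [Set.disjoint_right]
    rintro p (rfl | rfl | rfl) ⟨-, -, h⟩ <;> simp only at h <;> omega
  have hmaps : Set.MapsTo (swapPair a b) (invSet v ∪ T) (invSet (v * swap a b)) := by
    rintro p (hp | rfl | rfl | rfl)
    · exact swapPair_mem_invSet_mul_swap ha hab (hvac.trans hvcb) hp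
    all_goals
      rw [swapPair_eq_self (by dsimp only; omega) (by dsimp only; omega)]
      simp only [invSet, Set.mem_ofPred_eq, Perm.mul_apply, swap_apply_def]
      split_ifs <;> omega
  have hfin : (invSet (v * swap a b)).Finite := finite_invSet (N := max N b) fun i hi ↦ by
    rw [Perm.mul_apply, swap_apply_of_ne_of_ne (by omega) (by omega), hN i (by omega)]
  rw [permLen_eq_ncard_invSet, permLen_eq_ncard_invSet, ← hT, ← Set.ncard_union_eq hdisj
    (finite_invSet hN)]
  exact Set.ncard_le_ncard_of_injOn _ hmaps (swapPair_involutive hab).injective.injOn hfin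

end SwapPair

/-- Let `v` be a permutation with no descent at any position
`≥ k + 1`, i.e. `v_{k+1} < v_{k+2} < ⋯`.  Then there is exactly one integer `b > k`
such that `ℓ(v(k,b)) = ℓ(v) + 1`, namely the smallest `b > k` with `v_b > v_k`. -/
theorem unique_length_increasing_swap (v : Equiv.Perm ℕ) (hv : IsPermOfPos v)
    (k : ℕ) (hk : 1 ≤ k)
    (hinc : ∀ i, k + 1 ≤ i → v i < v (i + 1)) :
    ∃ b : ℕ, k < b ∧ v k < v b ∧ (∀ c, k < c → v k < v c → b ≤ c) ∧
      permLen (v * Equiv.swap k b) = permLen v + 1 ∧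
      ∀ b', k < b' → permLen (v * Equiv.swap k b') = permLen v + 1 → b' = b := by
  obtain ⟨-, N, hN⟩ := hv
  have hex : ∃ b, k < b ∧ v k < v b := by
    refine ⟨N + k + v k + 1, by omega, ?_⟩
    rw [hN (N + k + v k + 1) (by omega)]
    omega
  set b := Nat.find hex
  obtain ⟨hkb, hvkb⟩ : k < b ∧ v k < v b := Nat.find_spec hex
  have hmin : ∀ c, k < c → v k < v c → b ≤ c := fun c hkc hvkc ↦ Nat.find_min' hex ⟨hkc, hvkc⟩
  have hcover : ∀ c, k < c → c < b → v c < v k := fun c hkc hcb ↦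
    lt_of_le_of_ne (not_lt.1 fun h ↦ Nat.find_min hex hcb ⟨hkc, h⟩) (v.injective.ne (by omega))
  refine ⟨b, hkb, hvkb, hmin,
    permLen_mul_swap_of_cover hN hk hkb hvkb fun c hkc hcb ↦ .inl (hcover c hkc hcb),
    fun b' hkb' hlen ↦ ?_⟩
  rcases lt_trichotomy (v b') (v k) with hlt | heq | hgt
  · have := permLen_mul_swap_lt hN hk hkb' hlt
    omega
  · exact absurd (v.injective heq) (by omega)
  · by_contra hne
    have hbb' : b < b' := lt_of_le_of_ne (hmin b' hkb' hgt) (Ne.symm hne)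
    have hvbb' : v b < v b' := Nat.rel_of_forall_rel_succ_of_le_of_lt (· < ·) hinc hkb hbb'
    have := permLen_add_three_le_mul_swap hN hk hkb hbb' hvkb hvbb'
    omega
end
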